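/- arXiv:1407.4235 — 3 statements merged into one kernel-verified Lean document; each statement's English description precedes it below -/
import Mathlib

section
/- Let G be a finite simple graph with list assignment L, and let v be a vertex of G whose list is a singleton, L(v) = {c}. Let G′ be the subgraph of G induced on V(G) \ {v}, and define a list assignment L′ on G′ by L′(u) = L(u) \ {c} for every neighbor u of v in G and L′(u) = L(u) for every other vertex u. Then two proper L-colorings f_0 and f_r of G are reconfigurable in (G, L) if and only if their restrictions to V(G) \ {v} are reconfigurable in (G′, L′). -/
/-!
A vertex `v` with list `{c}` is coloured `c` by every proper `L`-colouring, so it is never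
recoloured and its neighbours never take the colour `c`. Hence restricting to `V \ {v}` and
extending by `c` at `v` are mutually inverse bijections between proper `L`-colourings of `G`
and proper `L'`-colourings of `G - v`, and both preserve "differ at exactly one vertex".
-/

/-- A proper `L`-coloring of `G`: each vertex gets a color from its list, and adjacent
vertices get different colors. -/
def IsProperListColoring {V α : Type*} (G : SimpleGraph V) (L : V → Finset α)
    (f : V → α) : Prop :=
  (∀ v, f v ∈ L v) ∧ ∀ ⦃u w⦄, G.Adj u w → f u ≠ f w

/-- Two proper `L`-colorings of `G` are adjacent (one recoloring step apart) if they
differ on exactly one vertex. -/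
def RecolorStep {V α : Type*} (G : SimpleGraph V) (L : V → Finset α)
    (f g : V → α) : Prop :=
  IsProperListColoring G L f ∧ IsProperListColoring G L g ∧ ∃! w, f w ≠ g w

/-- `f` and `g` are reconfigurable in `(G, L)` if there is a recoloring sequence between
them, i.e. a sequence of proper `L`-colorings starting at `f` and ending at `g` in which
consecutive colorings are adjacent. -/
def Reconfigurable {V α : Type*} (G : SimpleGraph V) (L : V → Finset α)
    (f g : V → α) : Prop :=
  Relation.ReflTransGen (RecolorStep G L) f g

section

variable {V α : Type*} {G : SimpleGraph V} {L : V → Finset α} {v : V} {c : α}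

theorem IsProperListColoring.apply_eq_of_eq_singleton {f : V → α}
    (hf : IsProperListColoring G L f) (hLv : L v = {c}) : f v = c :=
  Finset.mem_singleton.1 (hLv ▸ hf.1 v)

theorem existsUnique_ne_compl_singleton_iff {f g : V → α} (hv : f v = g v) :
    (∃! u : ({v}ᶜ : Set V), f u ≠ g u) ↔ ∃! w, f w ≠ g w := by
  constructor
  · rintro ⟨u, hu, huniq⟩
    refine ⟨u, hu, fun w hw => ?_⟩
    have hwv : w ≠ v := by rintro rfl; exact hw hv
    exact congrArg Subtype.val (huniq ⟨w, hwv⟩ hw)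
  · rintro ⟨w, hw, huniq⟩
    have hwv : w ≠ v := by rintro rfl; exact hw hv
    exact ⟨⟨w, hwv⟩, hw, fun u hu => Subtype.ext (huniq u hu)⟩

noncomputable def extendAt (v : V) (c : α) (g : ({v}ᶜ : Set V) → α) : V → α :=
  Function.extend Subtype.val g fun _ => c

@[simp]
theorem extendAt_self (g : ({v}ᶜ : Set V) → α) : extendAt v c g v = c :=
  Function.extend_apply' _ _ _ fun ⟨u, hu⟩ => u.2 hu

@[simp]
theorem extendAt_val (g : ({v}ᶜ : Set V) → α) (u : ({v}ᶜ : Set V)) :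
    extendAt v c g u = g u :=
  Subtype.val_injective.extend_apply _ _ u

theorem extendAt_restrict {f : V → α} (hfv : f v = c) :
    extendAt v c (fun u : ({v}ᶜ : Set V) => f u) = f := by
  funext w
  rcases eq_or_ne w v with rfl | hw
  · rw [extendAt_self, hfv]
  · exact extendAt_val _ ⟨w, hw⟩

variable [DecidableEq α] [DecidableRel G.Adj]

/-- The list assignment `L'` on `G - v`. -/
def deleteVertexList (G : SimpleGraph V) [DecidableRel G.Adj] (L : V → Finset α) (v : V)
    (c : α) (u : ({v}ᶜ : Set V)) : Finset α :=
  if G.Adj v u then L u \ {c} else L u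

theorem mem_deleteVertexList {u : ({v}ᶜ : Set V)} {a : α} :
    a ∈ deleteVertexList G L v c u ↔ a ∈ L u ∧ (G.Adj v u → a ≠ c) := by
  unfold deleteVertexList
  split_ifs with h <;> simp [h]

theorem IsProperListColoring.restrict {f : V → α} (hf : IsProperListColoring G L f)
    (hLv : L v = {c}) :
    IsProperListColoring (G.induce {v}ᶜ) (deleteVertexList G L v c) fun u => f u :=
  ⟨fun u => mem_deleteVertexList.2
      ⟨hf.1 u, fun hvu => hf.apply_eq_of_eq_singleton hLv ▸ hf.2 hvu.symm⟩,
    fun _ _ h => hf.2 h⟩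

theorem IsProperListColoring.extend {g : ({v}ᶜ : Set V) → α}
    (hg : IsProperListColoring (G.induce {v}ᶜ) (deleteVertexList G L v c) g)
    (hLv : L v = {c}) : IsProperListColoring G L (extendAt v c g) := by
  have hv : ∀ u : ({v}ᶜ : Set V), G.Adj v u → extendAt v c g v ≠ extendAt v c g u := by
    intro u hvu
    rw [extendAt_self, extendAt_val]
    exact ((mem_deleteVertexList.1 (hg.1 u)).2 hvu).symm
  refine ⟨fun w => ?_, fun a b hab => ?_⟩
  · rcases eq_or_ne w v with rfl | hw
    · simp [hLv]
    · rw [extendAt_val g ⟨w, hw⟩]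
      exact (mem_deleteVertexList.1 (hg.1 ⟨w, hw⟩)).1
  · rcases eq_or_ne a v with rfl | ha
    · exact hv ⟨b, hab.ne'⟩ hab
    rcases eq_or_ne b v with rfl | hb
    · exact (hv ⟨a, ha⟩ hab.symm).symm
    rw [extendAt_val g ⟨a, ha⟩, extendAt_val g ⟨b, hb⟩]
    exact hg.2 hab

theorem RecolorStep.restrict {f g : V → α} (h : RecolorStep G L f g) (hLv : L v = {c}) :
    RecolorStep (G.induce {v}ᶜ) (deleteVertexList G L v c) (fun u => f u) fun u => g u := by
  obtain ⟨hf, hg, hstep⟩ := h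
  refine ⟨hf.restrict hLv, hg.restrict hLv, (existsUnique_ne_compl_singleton_iff ?_).2 hstep⟩
  rw [hf.apply_eq_of_eq_singleton hLv, hg.apply_eq_of_eq_singleton hLv]

theorem RecolorStep.extend {p q : ({v}ᶜ : Set V) → α}
    (h : RecolorStep (G.induce {v}ᶜ) (deleteVertexList G L v c) p q) (hLv : L v = {c}) :
    RecolorStep G L (extendAt v c p) (extendAt v c q) := by
  obtain ⟨hp, hq, hstep⟩ := h
  refine ⟨hp.extend hLv, hq.extend hLv, (existsUnique_ne_compl_singleton_iff (v := v) ?_).1 ?_⟩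
  · rw [extendAt_self, extendAt_self]
  · simpa only [extendAt_val] using hstep

theorem Reconfigurable.restrict {f g : V → α} (h : Reconfigurable G L f g)
    (hLv : L v = {c}) :
    Reconfigurable (G.induce {v}ᶜ) (deleteVertexList G L v c) (fun u => f u) fun u => g u :=
  Relation.ReflTransGen.lift (fun (f : V → α) (u : ({v}ᶜ : Set V)) => f u)
    (fun _ _ (hstep : RecolorStep G L _ _) => hstep.restrict hLv) f g h

theorem Reconfigurable.extend {p q : ({v}ᶜ : Set V) → α}
    (h : Reconfigurable (G.induce {v}ᶜ) (deleteVertexList G L v c) p q) (hLv : L v = {c}) :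
    Reconfigurable G L (extendAt v c p) (extendAt v c q) :=
  Relation.ReflTransGen.lift (p := RecolorStep G L) (extendAt v c)
    (fun _ _ hstep => RecolorStep.extend hstep hLv) _ _ h

end

theorem reconfigurable_iff_delete_singleton_list_vertex_general
    {V α : Type*} [DecidableEq α]
    (G : SimpleGraph V) [DecidableRel G.Adj] (L : V → Finset α)
    (v : V) (c : α) (hLv : L v = {c})
    (f₀ fr : V → α)
    (h₀ : IsProperListColoring G L f₀) (hr : IsProperListColoring G L fr) :
    Reconfigurable G L f₀ fr ↔
      Reconfigurable (G.induce ({v}ᶜ : Set V))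
        (fun u => if G.Adj v u.1 then L u.1 \ {c} else L u.1)
        (fun u => f₀ u.1) (fun u => fr u.1) := by
  refine ⟨fun h => h.restrict hLv, fun h => ?_⟩
  have hext := Reconfigurable.extend (c := c) h hLv
  rwa [extendAt_restrict (h₀.apply_eq_of_eq_singleton hLv),
    extendAt_restrict (hr.apply_eq_of_eq_singleton hLv)] at hext

/-- Deleting a vertex `v` whose list is a singleton `{c}`, and removing `c` from the lists
of its neighbors, does not affect reconfigurability. -/
theorem reconfigurable_iff_delete_singleton_list_vertex
    {V α : Type*} [Fintype V] [DecidableEq V] [DecidableEq α]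
    (G : SimpleGraph V) [DecidableRel G.Adj] (L : V → Finset α)
    (v : V) (c : α) (hLv : L v = {c})
    (f₀ fr : V → α)
    (h₀ : IsProperListColoring G L f₀) (hr : IsProperListColoring G L fr) :
    Reconfigurable G L f₀ fr ↔
      Reconfigurable (G.induce ({v}ᶜ : Set V))
        (fun u => if G.Adj v u.1 then L u.1 \ {c} else L u.1)
        (fun u => f₀ u.1) (fun u => fr u.1) :=
  reconfigurable_iff_delete_singleton_list_vertex_general G L v c hLv f₀ fr h₀ hr
end

section
/- Let G be a finite simple graph with list assignment L, and let v be a vertex of G with |L(v)| ≥ deg(v) + 2, where deg(v) is the degree of v in G. Let G′ be the subgraph of G induced on V(G) \ {v}. Then two proper L-colorings f_0 and f_r of G are reconfigurable in (G, L) if and only if their restrictions to V(G) \ {v} are reconfigurable in (G′, L). -/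
section Aux

variable {V α : Type*} [Fintype V] [DecidableEq V] [DecidableEq α]
variable (G : SimpleGraph V) [DecidableRel G.Adj] (L : V → Finset α) (v : V)

lemma restrict_proper {f : V → α} (hf : IsProperListColoring G L f) :
    IsProperListColoring (G.induce ({v}ᶜ : Set V)) (fun u => L u.1) (fun u => f u.1) := by
  refine ⟨fun u => hf.1 u.1, fun u w h => hf.2 ?_⟩
  simpa using h

lemma step_restrict {f g : V → α} (h : RecolorStep G L f g) :
    Reconfigurable (G.induce ({v}ᶜ : Set V)) (fun u => L u.1)
      (fun u => f u.1) (fun u => g u.1) := by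
  obtain ⟨hf, hg, w, hw, huniq⟩ := h
  by_cases hwv : w = v
  · have heq : (fun u : ({v}ᶜ : Set V) => f u.1) = fun u => g u.1 := by
      funext u
      by_contra hne
      have : u.1 = w := huniq u.1 hne
      exact u.2 (by simp [this, hwv])
    rw [heq]
    exact Relation.ReflTransGen.refl
  · exact Relation.ReflTransGen.single
      ⟨restrict_proper G L v hf, restrict_proper G L v hg,
        ⟨⟨w, by simp [hwv]⟩, hw, fun u hu => Subtype.ext (huniq u.1 hu)⟩⟩

/-- Lift a single step, assuming no conflict at `v`. -/
lemma lift_step_easy {g g' : ({v}ᶜ : Set V) → α} {f : V → α}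
    (hf : IsProperListColoring G L f) (hres : (fun u => f u.1) = g)
    (hg' : IsProperListColoring (G.induce ({v}ᶜ : Set V)) (fun u => L u.1) g')
    (w : ({v}ᶜ : Set V)) (hw : g w ≠ g' w) (huniq : ∀ u, g u ≠ g' u → u = w)
    (hnoconf : G.Adj v w.1 → f v ≠ g' w) :
    ∃ f', IsProperListColoring G L f' ∧ (fun u => f' u.1) = g' ∧
      RecolorStep G L f f' := by
  have hfu : ∀ u : ({v}ᶜ : Set V), f u.1 = g u := fun u => congrFun hres u
  have hsame : ∀ u : ({v}ᶜ : Set V), u ≠ w → f u.1 = g' u := by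
    intro u hu
    rw [hfu u]
    by_contra hne
    exact hu (huniq u hne)
  have hprop : IsProperListColoring G L (Function.update f w.1 (g' w)) := by
    constructor
    · intro x
      by_cases hx : x = w.1
      · subst hx; simpa using hg'.1 w
      · rw [Function.update_of_ne hx]; exact hf.1 x
    · intro x y hxy
      by_cases hx : x = w.1 <;> by_cases hy : y = w.1
      · exact absurd (hx.trans hy.symm) (G.ne_of_adj hxy)
      · subst hx
        rw [Function.update_self, Function.update_of_ne hy]
        by_cases hyv : y = v
        · subst hyv
          exact fun h => hnoconf hxy.symm h.symm
        · have hy' : (⟨y, by simp [hyv]⟩ : ({v}ᶜ : Set V)) ≠ w :=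
            fun h => hy (congrArg Subtype.val h)
          rw [show f y = g' ⟨y, by simp [hyv]⟩ from hsame _ hy']
          exact hg'.2 (by simpa using hxy)
      · subst hy
        rw [Function.update_self, Function.update_of_ne hx]
        by_cases hxv : x = v
        · subst hxv
          exact fun h => hnoconf hxy h
        · have hx' : (⟨x, by simp [hxv]⟩ : ({v}ᶜ : Set V)) ≠ w :=
            fun h => hx (congrArg Subtype.val h)
          rw [show f x = g' ⟨x, by simp [hxv]⟩ from hsame _ hx']
          exact fun h => (hg'.2 (by simpa using hxy.symm) : g' w ≠ _) h.symm
      · rw [Function.update_of_ne hx, Function.update_of_ne hy]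
        exact hf.2 hxy
  refine ⟨Function.update f w.1 (g' w), hprop, ?_, hf, hprop, w.1, ?_, ?_⟩
  · funext u
    by_cases hu : u = w
    · subst hu; simp
    · have huw : u.1 ≠ w.1 := fun h => hu (Subtype.ext h)
      rw [Function.update_of_ne huw]
      exact hsame u hu
  · show f w.1 ≠ Function.update f w.1 (g' w) w.1
    rw [Function.update_self, hfu w]; exact hw
  · intro x hx
    by_contra hxw
    rw [Function.update_of_ne hxw] at hx
    exact hx rfl

lemma lift_step (hLv : G.degree v + 2 ≤ (L v).card)
    {g g' : ({v}ᶜ : Set V) → α} {f : V → α}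
    (hf : IsProperListColoring G L f) (hres : (fun u => f u.1) = g)
    (h : RecolorStep (G.induce ({v}ᶜ : Set V)) (fun u => L u.1) g g') :
    ∃ f', IsProperListColoring G L f' ∧ (fun u => f' u.1) = g' ∧
      Reconfigurable G L f f' := by
  obtain ⟨hg, hg', w, hw, huniq⟩ := h
  by_cases hconf : G.Adj v w.1 ∧ f v = g' w
  · -- first recolor v to a fresh color
    have hbad : ¬ (L v ⊆ insert (g' w) ((G.neighborFinset v).image f)) := by
      intro hsub
      have h1 : (insert (g' w) ((G.neighborFinset v).image f)).card ≤ G.degree v + 1 := by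
        calc (insert (g' w) ((G.neighborFinset v).image f)).card
            ≤ ((G.neighborFinset v).image f).card + 1 := Finset.card_insert_le _ _
          _ ≤ G.degree v + 1 := by
              exact Nat.add_le_add_right (Finset.card_image_le.trans_eq
                (G.card_neighborFinset_eq_degree v)) 1
      have := (Finset.card_le_card hsub).trans h1
      omega
    obtain ⟨c', hc'L, hc'bad⟩ := Finset.not_subset.mp hbad
    have hc'w : c' ≠ g' w := fun h => hc'bad (h ▸ Finset.mem_insert_self _ _)
    have hc'nb : ∀ u, G.Adj v u → c' ≠ f u := by
      intro u hu h
      exact hc'bad (Finset.mem_insert_of_mem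
        (Finset.mem_image.mpr ⟨u, (G.mem_neighborFinset v u).mpr hu, h.symm⟩))
    set f₁ := Function.update f v c' with hf₁
    have hf₁prop : IsProperListColoring G L f₁ := by
      constructor
      · intro x
        by_cases hx : x = v
        · subst hx; simpa [hf₁] using hc'L
        · rw [hf₁, Function.update_of_ne hx]; exact hf.1 x
      · intro x y hxy
        by_cases hx : x = v <;> by_cases hy : y = v
        · exact absurd (hx.trans hy.symm) (G.ne_of_adj hxy)
        · subst hx
          rw [hf₁, Function.update_self, Function.update_of_ne hy]
          exact hc'nb y hxy
        · subst hy
          rw [hf₁, Function.update_self, Function.update_of_ne hx]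
          exact fun h => hc'nb x hxy.symm h.symm
        · rw [hf₁, Function.update_of_ne hx, Function.update_of_ne hy]
          exact hf.2 hxy
    have hstep1 : RecolorStep G L f f₁ := by
      refine ⟨hf, hf₁prop, v, ?_, ?_⟩
      · show f v ≠ f₁ v
        rw [hf₁, Function.update_self, hconf.2]
        exact fun h => hc'w h.symm
      · intro x hx
        by_contra hxv
        rw [hf₁, Function.update_of_ne hxv] at hx
        exact hx rfl
    have hres₁ : (fun u : ({v}ᶜ : Set V) => f₁ u.1) = g := by
      funext u
      have : u.1 ≠ v := by
        have h2 := u.2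
        rw [Set.mem_compl_iff, Set.mem_singleton_iff] at h2
        exact h2
      rw [hf₁, Function.update_of_ne this]
      exact congrFun hres u
    obtain ⟨f', hf'prop, hf'res, hf'step⟩ :=
      lift_step_easy G L v hf₁prop hres₁ hg' w hw huniq
        (fun _ h => hc'w (by rw [hf₁, Function.update_self] at h; exact h))
    exact ⟨f', hf'prop, hf'res,
      (Relation.ReflTransGen.single hstep1).trans (Relation.ReflTransGen.single hf'step)⟩
  · have hnoconf : G.Adj v w.1 → f v ≠ g' w := by
      intro ha hc
      exact hconf ⟨ha, hc⟩
    obtain ⟨f', hf'prop, hf'res, hf'step⟩ :=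
      lift_step_easy G L v hf hres hg' w hw huniq hnoconf
    exact ⟨f', hf'prop, hf'res, Relation.ReflTransGen.single hf'step⟩

end Aux

/-- Deleting a vertex `v` whose list has at least `deg(v) + 2` colors does not affect
reconfigurability. -/
theorem reconfigurable_iff_delete_large_list_vertex
    {V α : Type*} [Fintype V] [DecidableEq V] [DecidableEq α]
    (G : SimpleGraph V) [DecidableRel G.Adj] (L : V → Finset α)
    (v : V) (hLv : G.degree v + 2 ≤ (L v).card)
    (f₀ fr : V → α)
    (h₀ : IsProperListColoring G L f₀) (hr : IsProperListColoring G L fr) :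
    Reconfigurable G L f₀ fr ↔
      Reconfigurable (G.induce ({v}ᶜ : Set V)) (fun u => L u.1)
        (fun u => f₀ u.1) (fun u => fr u.1) := by
  constructor
  · intro h
    induction h with
    | refl => exact Relation.ReflTransGen.refl
    | tail _ hstep ih =>
      exact (ih (hstep.1)).trans (step_restrict G L v hstep)
  · intro h
    -- lift the sequence
    have key : ∀ (g g' : ({v}ᶜ : Set V) → α),
        Relation.ReflTransGen (RecolorStep (G.induce ({v}ᶜ : Set V)) (fun u => L u.1)) g g' →
        ∀ f : V → α, IsProperListColoring G L f → (fun u => f u.1) = g →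
        ∃ f', IsProperListColoring G L f' ∧ (fun u => f' u.1) = g' ∧
          Reconfigurable G L f f' := by
      intro g g' hgg'
      induction hgg' with
      | refl => exact fun f hf hres => ⟨f, hf, hres, Relation.ReflTransGen.refl⟩
      | tail _ hstep ih =>
        intro f hf hres
        obtain ⟨f₁, hf₁, hres₁, hrec₁⟩ := ih f hf hres
        obtain ⟨f₂, hf₂, hres₂, hrec₂⟩ := lift_step G L v hLv hf₁ hres₁ hstep
        exact ⟨f₂, hf₂, hres₂, hrec₁.trans hrec₂⟩
    obtain ⟨f', hf'prop, hf'res, hf'rec⟩ := key _ _ h f₀ h₀ rfl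
    by_cases hfv : f' v = fr v
    · have : f' = fr := by
        funext x
        by_cases hx : x = v
        · subst hx; exact hfv
        · exact congrFun hf'res ⟨x, by simp [hx]⟩
      rwa [← this]
    · refine hf'rec.trans (Relation.ReflTransGen.single ⟨hf'prop, hr, v, hfv, ?_⟩)
      intro x hx
      by_contra hxv
      exact hx (congrFun hf'res ⟨x, by simp [hxv]⟩)
end

section
/- Let G be a finite simple graph with list assignment L, let v be a vertex of G with |L(v)| ≥ deg(v) + 2, let f be a proper L-coloring of G, let u be a neighbor of v, and let c′ ∈ L(u) be a color such that f(x) ≠ c′ for every neighbor x of u with x ≠ v. Then there exists a proper L-coloring g of G with g(u) = c′ and g(x) = f(x) for every vertex x ∉ {u, v}, such that g can be reached from f by a recoloring sequence of at most two recoloring steps. -/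
/-
If `f(v) ≠ c'`, recolor `u` directly. Otherwise `|L(v)| ≥ deg(v) + 2` leaves a color of `L(v)`
other than `c'` that no neighbor of `v` uses; moving `v` to it frees `c'` at `u`.
-/

open Function

section

variable {V α : Type*} {G : SimpleGraph V} {L : V → Finset α} {f : V → α}

theorem IsProperListColoring.update [DecidableEq V] (hf : IsProperListColoring G L f)
    {w : V} {b : α} (hb : b ∈ L w) (hnb : ∀ x, G.Adj w x → f x ≠ b) :
    IsProperListColoring G L (update f w b) := by
  refine ⟨fun x => ?_, fun x y hxy => ?_⟩
  · rcases eq_or_ne x w with rfl | hx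
    · simpa using hb
    · simpa [hx] using hf.1 x
  · rcases eq_or_ne x w with rfl | hx
    · simpa [hxy.ne.symm] using (hnb y hxy).symm
    · rcases eq_or_ne y w with rfl | hy
      · simpa [hx] using hnb x hxy.symm
      · simpa [hx, hy] using hf.2 hxy

theorem recolorStep_update [DecidableEq V] (hf : IsProperListColoring G L f)
    {w : V} {b : α} (hb : b ∈ L w) (hnb : ∀ x, G.Adj w x → f x ≠ b) (hfw : f w ≠ b) :
    RecolorStep G L f (update f w b) := by
  refine ⟨hf, hf.update hb hnb, w, by simpa using hfw, fun x hx => ?_⟩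
  by_contra hxw
  exact hx (update_of_ne hxw b f).symm

theorem exists_mem_notMem_forall_adj_ne (G : SimpleGraph V) (L : V → Finset α) (f : V → α)
    (v : V) [Fintype (G.neighborSet v)] (S : Finset α) (hL : G.degree v + S.card < (L v).card) :
    ∃ a ∈ L v, a ∉ S ∧ ∀ x, G.Adj v x → f x ≠ a := by
  classical
  have hcard : (S ∪ (G.neighborFinset v).image f).card < (L v).card :=
    calc (S ∪ (G.neighborFinset v).image f).card
        ≤ S.card + ((G.neighborFinset v).image f).card := Finset.card_union_le _ _
      _ ≤ S.card + G.degree v := by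
          grw [Finset.card_image_le, SimpleGraph.card_neighborFinset_eq_degree]
      _ < (L v).card := by omega
  obtain ⟨a, haL, ha⟩ := Finset.exists_mem_notMem_of_card_lt_card hcard
  simp only [Finset.mem_union, Finset.mem_image, SimpleGraph.mem_neighborFinset, not_or,
    not_exists, not_and] at ha
  exact ⟨a, haL, ha.1, ha.2⟩

end

theorem recolor_neighbor_of_large_list_vertex_general
    {V α : Type*} [Fintype V]
    (G : SimpleGraph V) [DecidableRel G.Adj] (L : V → Finset α)
    (v : V) (hLv : G.degree v + 2 ≤ (L v).card)
    (f : V → α) (hf : IsProperListColoring G L f)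
    (u : V) (huv : G.Adj v u) (c' : α) (hc' : c' ∈ L u)
    (hnbr : ∀ x : V, G.Adj u x → x ≠ v → f x ≠ c') :
    ∃ g : V → α, IsProperListColoring G L g ∧ g u = c' ∧
      (∀ x : V, x ≠ u → x ≠ v → g x = f x) ∧
      (g = f ∨ RecolorStep G L f g ∨ ∃ h : V → α, RecolorStep G L f h ∧ RecolorStep G L h g) := by
  classical
  by_cases hfu : f u = c'
  · exact ⟨f, hf, hfu, fun _ _ _ => rfl, Or.inl rfl⟩
  by_cases hfv : f v = c'
  · obtain ⟨a, haL, hac', ha⟩ :=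
      exists_mem_notMem_forall_adj_ne G L f v {c'} (by rw [Finset.card_singleton]; omega)
    set h := update f v a
    have hh : IsProperListColoring G L h := hf.update haL ha
    have hnbr_h : ∀ x, G.Adj u x → h x ≠ c' := fun x hx => by
      rcases eq_or_ne x v with rfl | hxv
      · simpa [h] using hac'
      · simpa [h, hxv] using hnbr x hx hxv
    refine ⟨update h u c', hh.update hc' hnbr_h, update_self .., fun x hxu hxv => ?_,
      .inr (.inr ⟨h, recolorStep_update hf haL ha ?_, recolorStep_update hh hc' hnbr_h ?_⟩)⟩
    · simp [h, hxu, hxv]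
    · simpa [hfv, eq_comm] using hac'
    · simpa [h, huv.ne.symm] using hfu
  · have hnbr' : ∀ x, G.Adj u x → f x ≠ c' := fun x hx => by
      rcases eq_or_ne x v with rfl | hxv
      · exact hfv
      · exact hnbr x hx hxv
    exact ⟨update f u c', hf.update hc' hnbr', update_self .., fun x hxu _ => update_of_ne hxu ..,
      .inr (.inl (recolorStep_update hf hc' hnbr' hfu))⟩

/-- If `v` has a list of size at least `deg(v) + 2` and `u` is a neighbor of `v` such that
the color `c' ∈ L(u)` is not used by any neighbor of `u` other than `v`, then `u` can be
recolored to `c'` (changing only the colors of `u` and possibly `v`) in at most two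
recoloring steps. -/
theorem recolor_neighbor_of_large_list_vertex
    {V α : Type*} [Fintype V] [DecidableEq α]
    (G : SimpleGraph V) [DecidableRel G.Adj] (L : V → Finset α)
    (v : V) (hLv : G.degree v + 2 ≤ (L v).card)
    (f : V → α) (hf : IsProperListColoring G L f)
    (u : V) (huv : G.Adj v u) (c' : α) (hc' : c' ∈ L u)
    (hnbr : ∀ x : V, G.Adj u x → x ≠ v → f x ≠ c') :
    ∃ g : V → α, IsProperListColoring G L g ∧ g u = c' ∧
      (∀ x : V, x ≠ u → x ≠ v → g x = f x) ∧
      (g = f ∨ RecolorStep G L f g ∨ ∃ h : V → α, RecolorStep G L f h ∧ RecolorStep G L h g) :=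
  recolor_neighbor_of_large_list_vertex_general G L v hLv f hf u huv c' hc' hnbr
end
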